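/- arXiv:1409.1672 — 3 statements merged into one kernel-verified Lean document; each statement's English description precedes it below -/
import Mathlib

section
/- Orthogonal decomposition: Let b be a symmetric bilinear form on a finitely generated module M over a commutative real Riesz algebra R, and let N = {x ∈ M : b(x,x) ∉ R^×}. If N is a proper submodule of M, then there exist x₁, ..., x_k ∈ M with each b(x_i, x_i) invertible in R, such that M = Rx₁ ⊥ ... ⊥ Rx_k ⊥ N, i.e., M is the direct sum of the cyclic submodules Rx_i and N, and these summands are pairwise b-orthogonal. -/
/-!
Once `N` is a proper submodule, `r • x₀ ∈ N ↔ r ∉ Rˣ` for any `x₀ ∉ N`, so the nonunits of `R` are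
closed under addition and `R` is local. A local real Riesz algebra is a field: a unit `u` is
comparable with `0` because `√(u²)` equals `u` or `-u` (one of `√(u²) ± u` is a unit); an element
`Q ≥ γ > 0` cannot be a nonunit, since then `s = √(Q - γ)` is "non-real" modulo the maximal ideal
and the archimedean axiom, applied to `Q - c` with `c` the real number cut out by `Q`, forces
`Q = c`; hence every nonunit is infinitesimal, hence zero. Over the field `R`, the isotropic
subspace `N` is the radical of `b`, and an orthogonal basis of a complement of `N` gives the `xᵢ`.
-/

open Matrix

/-- `a` is strictly positive: nonnegative, nonzero and invertible. -/
def SPos {R : Type*} [Ring R] [PartialOrder R] (a : R) : Prop :=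
  0 ≤ a ∧ a ≠ 0 ∧ IsUnit a

/-- A Riesz algebra: a partially ordered, strictly archimedean, lattice-ordered
commutative ℝ-algebra. -/
class RieszAlgebra (R : Type*) extends CommRing R, Lattice R, Algebra ℝ R where
  add_le_add_left : ∀ a b : R, a ≤ b → ∀ c : R, c + a ≤ c + b
  mul_nonneg : ∀ a b : R, 0 ≤ a → 0 ≤ b → 0 ≤ a * b
  sq_nonneg : ∀ a : R, 0 ≤ a * a
  smul_nonneg : ∀ (t : ℝ) (a : R), 0 ≤ t → 0 ≤ a → 0 ≤ t • a
  strictly_archimedean : ∀ a b : R, (∀ t : ℝ, SPos (a - t • b)) → b = 0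

/-- A real Riesz algebra: every strictly positive element has a (unique) strictly
positive square root. -/
class RealRieszAlgebra (R : Type*) extends RieszAlgebra R where
  sqrt : R → R
  sqrt_spos : ∀ a : R, SPos a → SPos (sqrt a)
  sqrt_sq : ∀ a : R, SPos a → sqrt a * sqrt a = a
  sqrt_unique : ∀ a b : R, SPos a → SPos b → b * b = a → b = sqrt a

namespace RieszAlgebra

variable {R : Type*} [RieszAlgebra R]

instance : IsOrderedAddMonoid R where
  add_le_add_left a b h c := by simpa only [add_comm c] using RieszAlgebra.add_le_add_left a b h c

instance : ZeroLEOneClass R where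
  zero_le_one := by simpa using RieszAlgebra.sq_nonneg (1 : R)

instance : IsOrderedRing R := .of_mul_nonneg RieszAlgebra.mul_nonneg

lemma algebraMap_nonneg {t : ℝ} (ht : 0 ≤ t) : 0 ≤ algebraMap ℝ R t := by
  simpa [Algebra.algebraMap_eq_smul_one] using smul_nonneg t 1 ht zero_le_one

lemma algebraMap_mono : Monotone (algebraMap ℝ R) := fun s t h =>
  sub_nonneg.mp (by rw [← map_sub]; exact algebraMap_nonneg (sub_nonneg.mpr h))

lemma algebraMap_mul_le_one {u : ℝ} (hu : 0 < u) {d : R} (hd : d ≤ algebraMap ℝ R u⁻¹) :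
    algebraMap ℝ R u * d ≤ 1 :=
  calc algebraMap ℝ R u * d ≤ algebraMap ℝ R u * algebraMap ℝ R u⁻¹ :=
        mul_le_mul_of_nonneg_left hd (algebraMap_nonneg hu.le)
    _ = 1 := by rw [← map_mul, mul_inv_cancel₀ hu.ne', map_one]

lemma eq_zero_of_forall_nonneg_isUnit [Nontrivial R] {a d : R}
    (hnonneg : ∀ t : ℝ, 0 ≤ a - algebraMap ℝ R t * d)
    (hunit : ∀ t : ℝ, IsUnit (a - algebraMap ℝ R t * d)) : d = 0 :=
  strictly_archimedean a d fun t => by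
    rw [Algebra.smul_def]
    exact ⟨hnonneg t, (hunit t).ne_zero, hunit t⟩

def IsInfinitesimal (d : R) : Prop :=
  ∀ ε : ℝ, 0 < ε → d ≤ algebraMap ℝ R ε ∧ -d ≤ algebraMap ℝ R ε

lemma IsInfinitesimal.eq_zero [Nontrivial R] {a d : R} (hd : IsInfinitesimal d) (ha : 1 ≤ a)
    (hunit : ∀ t : ℝ, IsUnit (a - algebraMap ℝ R t * d)) : d = 0 := by
  refine eq_zero_of_forall_nonneg_isUnit (fun t => sub_nonneg.mpr (le_trans ?_ ha)) hunit
  rcases lt_trichotomy t 0 with ht | rfl | ht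
  · have hu : 0 < -t := neg_pos.mpr ht
    simpa using algebraMap_mul_le_one hu (hd _ (inv_pos.mpr hu)).2
  · simp
  · exact algebraMap_mul_le_one ht (hd _ (inv_pos.mpr ht)).1

end RieszAlgebra

lemma isUnit_algebraMap_of_ne_zero {K A : Type*} [Field K] [Semiring A] [Algebra K A] {t : K}
    (ht : t ≠ 0) : IsUnit (algebraMap K A t) :=
  (Ne.isUnit ht).map _

namespace IsLocalRing

variable {R : Type*} [CommRing R] [IsLocalRing R] {a b : R}

lemma isUnit_add_of_not_isUnit (ha : IsUnit a) (hb : ¬IsUnit b) : IsUnit (a + b) :=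
  (isUnit_or_isUnit_of_isUnit_add (by simpa using ha : IsUnit (a + b + -b))).resolve_right
    (by rwa [IsUnit.neg_iff])

lemma isUnit_sub_of_not_isUnit (ha : IsUnit a) (hb : ¬IsUnit b) : IsUnit (a - b) := by
  rw [sub_eq_add_neg]
  exact isUnit_add_of_not_isUnit ha (by rwa [IsUnit.neg_iff])

end IsLocalRing

namespace RealRieszAlgebra

open RieszAlgebra IsLocalRing

variable {R : Type*} [RealRieszAlgebra R] [IsLocalRing R]

lemma nonneg_or_nonpos_of_isUnit {u : R} (hu : IsUnit u) : 0 ≤ u ∨ u ≤ 0 := by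
  have hsq : SPos (u * u) := ⟨RieszAlgebra.sq_nonneg u, (hu.mul hu).ne_zero, hu.mul hu⟩
  obtain ⟨hz0, -, hz⟩ := sqrt_spos _ hsq
  have hprod : (sqrt (u * u) - u) * (sqrt (u * u) + u) = 0 := by
    linear_combination sqrt_sq _ hsq
  have hsum : IsUnit ((sqrt (u * u) - u) + (sqrt (u * u) + u)) := by
    rw [sub_add_add_cancel, ← two_mul]
    rw [← map_ofNat (algebraMap ℝ R) 2]
    exact (isUnit_algebraMap_of_ne_zero two_ne_zero).mul hz
  rcases isUnit_or_isUnit_of_isUnit_add hsum with h | h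
  · right
    rw [h.mul_right_eq_zero, add_eq_zero_iff_neg_eq'] at hprod
    simpa [← hprod] using hz0
  · left
    rw [h.mul_left_eq_zero, sub_eq_zero] at hprod
    exact hprod ▸ hz0

lemma le_or_le_of_not_isUnit {Q : R} (hQ : ¬IsUnit Q) {t : ℝ} (ht : t ≠ 0) :
    Q ≤ algebraMap ℝ R t ∨ algebraMap ℝ R t ≤ Q := by
  have hu : IsUnit (Q - algebraMap ℝ R t) := by
    simpa using (isUnit_sub_of_not_isUnit (isUnit_algebraMap_of_ne_zero ht) hQ).neg
  exact (nonneg_or_nonpos_of_isUnit hu).symm.imp sub_nonpos.mp sub_nonneg.mp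

/-- `s² = Q - γ ≡ -γ` modulo the maximal ideal, so `s` is congruent to no real number. -/
lemma exists_nonneg_forall_isUnit_sub {Q : R} (hQ : ¬IsUnit Q) {γ : ℝ} (hγ : 0 < γ)
    (hγQ : algebraMap ℝ R γ ≤ Q) : ∃ s : R, 0 ≤ s ∧ ∀ t : ℝ, IsUnit (s - algebraMap ℝ R t) := by
  have hu : IsUnit (Q - algebraMap ℝ R γ) := by
    simpa using (isUnit_sub_of_not_isUnit (isUnit_algebraMap_of_ne_zero hγ.ne') hQ).neg
  have hpos : SPos (Q - algebraMap ℝ R γ) := ⟨sub_nonneg.mpr hγQ, hu.ne_zero, hu⟩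
  refine ⟨sqrt _, (sqrt_spos _ hpos).1, fun t => ?_⟩
  refine isUnit_of_mul_isUnit_left (y := sqrt (Q - algebraMap ℝ R γ) + algebraMap ℝ R t) ?_
  have e : (sqrt (Q - algebraMap ℝ R γ) - algebraMap ℝ R t) *
      (sqrt (Q - algebraMap ℝ R γ) + algebraMap ℝ R t) = -(algebraMap ℝ R (γ + t ^ 2) - Q) := by
    rw [map_add, map_pow]
    linear_combination sqrt_sq _ hpos
  rw [e]
  exact (isUnit_sub_of_not_isUnit (isUnit_algebraMap_of_ne_zero (by positivity)) hQ).neg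

lemma exists_isInfinitesimal_sub {Q : R} (hQ : ¬IsUnit Q) {γ : ℝ} (hγ : 0 < γ)
    (hγQ : algebraMap ℝ R γ ≤ Q) (hbdd : BddAbove {t : ℝ | algebraMap ℝ R t ≤ Q}) :
    ∃ c : ℝ, 0 < c ∧ IsInfinitesimal (Q - algebraMap ℝ R c) := by
  set S := {t : ℝ | algebraMap ℝ R t ≤ Q}
  have hγS : γ ∈ S := hγQ
  have hγc : γ ≤ sSup S := le_csSup hbdd hγS
  refine ⟨sSup S, hγ.trans_le hγc, fun ε hε => ⟨?_, ?_⟩⟩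
  · have hnot : sSup S + ε ∉ S := fun h => by linarith [le_csSup hbdd h]
    have hle := (le_or_le_of_not_isUnit hQ (by linarith : sSup S + ε ≠ 0)).resolve_right hnot
    rw [map_add] at hle
    exact sub_le_iff_le_add'.mpr hle
  · obtain ⟨t, htS, hlt⟩ := exists_lt_of_lt_csSup ⟨γ, hγS⟩ (sub_lt_self (sSup S) hε)
    have hle : algebraMap ℝ R (sSup S - ε) ≤ Q := (algebraMap_mono hlt.le).trans htS
    rw [map_sub] at hle
    rwa [neg_sub, sub_le_comm]

theorem isUnit_of_algebraMap_le {γ : ℝ} (hγ : 0 < γ) {Q : R} (hγQ : algebraMap ℝ R γ ≤ Q) :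
    IsUnit Q := by
  by_contra hQ
  have htQ : ∀ t : ℝ, ¬IsUnit (algebraMap ℝ R t * Q) := fun t h => hQ (isUnit_of_mul_isUnit_right h)
  obtain ⟨s, hs0, hs⟩ := exists_nonneg_forall_isUnit_sub hQ hγ hγQ
  by_cases hbdd : BddAbove {t : ℝ | algebraMap ℝ R t ≤ Q}
  · obtain ⟨c, hc, hQc⟩ := exists_isInfinitesimal_sub hQ hγ hγQ hbdd
    have hQc0 : Q - algebraMap ℝ R c = 0 := by
      refine hQc.eq_zero (le_add_of_nonneg_right hs0 : 1 ≤ 1 + s) fun t => ?_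
      have e : 1 + s - algebraMap ℝ R t * (Q - algebraMap ℝ R c) =
          s - algebraMap ℝ R (-(1 + t * c)) - algebraMap ℝ R t * Q := by
        simp only [map_neg, map_add, map_mul, map_one]
        ring
      rw [e]
      exact isUnit_sub_of_not_isUnit (hs _) (htQ t)
    exact hQ (sub_eq_zero.mp hQc0 ▸ isUnit_algebraMap_of_ne_zero hc.ne')
  · have hle : ∀ t : ℝ, algebraMap ℝ R t ≤ Q := fun t =>
      let ⟨_, hu, htu⟩ := not_bddAbove_iff.mp hbdd t
      (algebraMap_mono htu.le).trans hu
    refine one_ne_zero (eq_zero_of_forall_nonneg_isUnit (a := Q + s) (fun t => ?_) (fun t => ?_))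
    · rw [mul_one, add_sub_right_comm]
      exact add_nonneg (sub_nonneg.mpr (hle t)) hs0
    · rw [mul_one, add_sub_assoc, add_comm]
      exact isUnit_add_of_not_isUnit (hs t) hQ

lemma isInfinitesimal_of_not_isUnit {n : R} (hn : ¬IsUnit n) : IsInfinitesimal n := by
  have hle : ∀ {m : R}, ¬IsUnit m → ∀ {ε : ℝ}, 0 < ε → m ≤ algebraMap ℝ R ε := fun hm _ hε =>
    (le_or_le_of_not_isUnit hm hε.ne').resolve_right fun h => hm (isUnit_of_algebraMap_le hε h)
  exact fun ε hε => ⟨hle hn hε, hle (by rwa [IsUnit.neg_iff]) hε⟩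

theorem eq_zero_of_not_isUnit {n : R} (hn : ¬IsUnit n) : n = 0 :=
  (isInfinitesimal_of_not_isUnit hn).eq_zero le_rfl fun _ =>
    isUnit_sub_of_not_isUnit isUnit_one fun h => hn (isUnit_of_mul_isUnit_right h)

theorem isField_of_isLocalRing : IsField R :=
  isField_iff_maximalIdeal_eq.mpr <| eq_bot_iff.mpr fun n hn =>
    (Submodule.mem_bot R).mpr (eq_zero_of_not_isUnit ((mem_maximalIdeal n).mp hn))

end RealRieszAlgebra

theorem iSupIndep_of_disjoint_of_le {α ι : Type*} [CompleteLattice α] {f q : ι → α}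
    (hdisj : ∀ i, Disjoint (f i) (q i)) (hle : ∀ i j, i ≠ j → f j ≤ q i) : iSupIndep f :=
  fun i => (hdisj i).mono_right (iSup₂_le fun j hj => hle i j (Ne.symm hj))

theorem IsLocalRing.of_isotropic_submodule_ne_top {R M : Type*} [CommRing R] [AddCommGroup M]
    [Module R M] (b : M →ₗ[R] M →ₗ[R] R) (N : Submodule R M)
    (hN : ∀ x, x ∈ N ↔ ¬IsUnit (b x x)) (hne : N ≠ ⊤) : IsLocalRing R := by
  obtain ⟨x₀, -, hx₀⟩ := SetLike.exists_of_lt hne.lt_top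
  have hsmul : ∀ r : R, r • x₀ ∈ N ↔ ¬IsUnit r := fun r => by
    have hu : IsUnit (b x₀ x₀) := not_not.mp ((hN x₀).not.mp hx₀)
    simp only [hN, map_smul, LinearMap.smul_apply, smul_eq_mul, IsUnit.mul_iff, hu, and_true,
      and_self]
  have : Nontrivial R := nontrivial_of_ne 0 1 fun h =>
    (hsmul 0).mp (by simp) (h ▸ isUnit_one)
  exact .of_nonunits_add fun a c ha hc =>
    (hsmul _).mp (add_smul a c x₀ ▸ N.add_mem ((hsmul a).mpr ha) ((hsmul c).mpr hc))

namespace LinearMap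

variable {K M : Type*} [Field K] [AddCommGroup M] [Module K M] {b : M →ₗ[K] M →ₗ[K] K}

theorem apply_eq_zero_of_mem_isotropic_submodule [NeZero (2 : K)] (hsymm : ∀ x y, b x y = b y x)
    {N : Submodule K M} (hN : ∀ x, x ∈ N ↔ b x x = 0) (x : M) {n : M} (hn : n ∈ N) :
    b x n = 0 := by
  by_contra hxn
  -- `x + r • n ∈ N ↔ x ∈ N`, while `b (x + r • n) (x + r • n)` is a nonconstant affine function of `r`
  have hiff : ∀ r : K, b x x + 2 * r * b x n = 0 ↔ b x x = 0 := fun r => by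
    rw [← hN, ← N.add_mem_iff_left (N.smul_mem r hn), hN]
    simp only [map_add, map_smul, LinearMap.add_apply, LinearMap.smul_apply, smul_eq_mul,
      (hN n).mp hn, hsymm n x]
    ring_nf
  have hxx : b x x = 0 := (hiff (-b x x / (2 * b x n))).mp (by field_simp; ring)
  exact hxn (by simpa [hxx, two_ne_zero] using (hiff 1).mpr hxx)

end LinearMap

namespace LinearMap

variable {K M : Type*} [Field K] [AddCommGroup M] [Module K M] {b : M →ₗ[K] M →ₗ[K] K}

theorem exists_orthogonal_decomposition_of_isotropic_submodule [Invertible (2 : K)]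
    [FiniteDimensional K M] (hsymm : ∀ x y, b x y = b y x) {N : Submodule K M}
    (hN : ∀ x, x ∈ N ↔ b x x = 0) :
    ∃ (k : ℕ) (x : Fin k → M),
      (∀ i, b (x i) (x i) ≠ 0) ∧
      (∀ i j, i ≠ j → b (x i) (x j) = 0) ∧
      (∀ i, ∀ m ∈ N, b (x i) m = 0) ∧
      (iSupIndep (fun o : Option (Fin k) => Option.elim o N (fun i => Submodule.span K {x i}))) ∧
      ((⨆ o : Option (Fin k), Option.elim o N (fun i => Submodule.span K {x i})) = ⊤) := by
  obtain ⟨C, hC⟩ := N.exists_isCompl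
  have hsymmC : IsSymm (BilinForm.restrict b C) := ⟨fun x y => hsymm x y⟩
  obtain ⟨v, hv⟩ := BilinForm.exists_orthogonal_basis hsymmC
  have hvC : ∀ i, (v i : M) ∈ C := fun i => (v i).2
  have hvN : ∀ i, b (v i) (v i) ≠ 0 := fun i hi =>
    v.ne_zero i (Subtype.ext (Submodule.disjoint_def.mp hC.disjoint _ ((hN _).mpr hi) (hvC i)))
  have horth : ∀ i j, i ≠ j → b (v i) (v j) = 0 := fun i j hij => hv hij
  have hspan : (⨆ i, Submodule.span K {(v i : M)}) = C := by
    rw [← Submodule.span_range_eq_iSup,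
      show Set.range (fun i => (v i : M)) = C.subtype '' Set.range v from Set.range_comp _ _,
      Submodule.span_image, v.span_eq, Submodule.map_subtype_top]
  refine ⟨_, fun i => v i, hvN, horth,
    fun i m hm => apply_eq_zero_of_mem_isotropic_submodule hsymm hN _ hm, ?_, ?_⟩
  · refine iSupIndep_of_disjoint_of_le (q := fun o => Option.elim o C fun i => ker (b (v i)))
      ?_ ?_
    · rintro (_ | i)
      · exact hC.disjoint
      · rw [Option.elim_some, Option.elim_some, ← orthogonal_span_singleton_eq_to_lin_ker]
        exact disjoint_iff.mpr (span_singleton_inf_orthogonal_eq_bot b _ (hvN i))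
    · rintro (_ | i) (_ | j) hij
      · exact absurd rfl hij
      · exact (Submodule.span_singleton_le_iff_mem _ _).mpr (hvC j)
      · exact fun m hm => apply_eq_zero_of_mem_isotropic_submodule hsymm hN _ hm
      · exact (Submodule.span_singleton_le_iff_mem _ _).mpr
          (horth i j fun h => hij (congrArg some h))
  · rw [iSup_option]
    simp only [Option.elim_none, Option.elim_some]
    rw [hspan, hC.sup_eq_top]

end LinearMap

/-- Orthogonal decomposition: if `N = {x : b(x,x) ∉ R^×}` is a proper submodule of the
finitely generated module `M`, then `M = Rx₁ ⊥ ⋯ ⊥ Rx_k ⊥ N` with each `b(xᵢ,xᵢ)`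
invertible. -/
theorem stmt7 {R : Type*} [RealRieszAlgebra R] {M : Type*} [AddCommGroup M] [Module R M]
    [Module.Finite R M]
    (b : M →ₗ[R] M →ₗ[R] R) (hsymm : ∀ x y : M, b x y = b y x)
    (N : Submodule R M) (hN : (N : Set M) = {x : M | ¬ IsUnit (b x x)})
    (hne : N ≠ ⊤) :
    ∃ (k : ℕ) (x : Fin k → M),
      (∀ i, IsUnit (b (x i) (x i))) ∧
      (∀ i j, i ≠ j → b (x i) (x j) = 0) ∧
      (∀ i, ∀ m ∈ N, b (x i) m = 0) ∧
      (iSupIndep (fun o : Option (Fin k) =>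
        Option.elim o N (fun i => Submodule.span R {x i}))) ∧
      ((⨆ o : Option (Fin k), Option.elim o N (fun i => Submodule.span R {x i})) = ⊤) := by
  have hmem : ∀ y, y ∈ N ↔ ¬IsUnit (b y y) := Set.ext_iff.mp hN
  have : IsLocalRing R := .of_isotropic_submodule_ne_top b N hmem hne
  let _ : Field R := RealRieszAlgebra.isField_of_isLocalRing.toField
  have : CharZero R := charZero_of_injective_algebraMap (algebraMap ℝ R).injective
  have : Invertible (2 : R) := invertibleOfNonzero two_ne_zero
  obtain ⟨k, x, hx, hrest⟩ := LinearMap.exists_orthogonal_decomposition_of_isotropic_submodule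
    hsymm (N := N) fun y => by rw [hmem, isUnit_iff_ne_zero, not_not]
  exact ⟨k, x, fun i => isUnit_iff_ne_zero.mpr (hx i), hrest⟩
end

section
/- Conjugate gradient residual orthogonality: Under the CGM recursion over a commutative real Riesz algebra R with positive definite symmetric matrix A (feasible up to step k), the residuals satisfy r_iᵀ r_j = 0 for all i ≠ j with 0 ≤ i, j ≤ k, and the search directions are A-conjugate: p_iᵀ A p_j = 0 for i ≠ j, 0 ≤ i, j ≤ k. -/
open Matrix

/-!
The classical Krylov argument goes through verbatim over `R`, by induction on the step:
`rₘ₊₁` is orthogonal to all earlier directions (`rₘ₊₁ᵀpₘ = 0` is exactly the choice of `αₘ`),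
hence to all earlier residuals, since each `rᵢ` is a combination of `pᵢ` and `pᵢ₋₁`; and
`pₘ₊₁` is `A`-conjugate to `pₘ` by the choice of the coefficient of `pₘ`, and to each earlier
`pᵢ` because `αᵢ A pᵢ = rᵢ - rᵢ₊₁`. The only point where the algebra `R` matters is that the
step sizes `αᵢ = rᵢᵀrᵢ / pᵢᵀApᵢ` must be invertible. Positive definiteness makes `R` a field
(`c · Aᵢᵢ · c` is a unit for every `c ≠ 0`), and a sum of squares, all of them nonnegative,
vanishes only when every term does.
-/

instance RieszAlgebra.toIsOrderedAddMonoid {R : Type*} [RieszAlgebra R] :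
    IsOrderedAddMonoid R where
  add_le_add_left a b hab c := by
    simpa only [add_comm _ c] using RieszAlgebra.add_le_add_left a b hab c

theorem RieszAlgebra.dotProduct_self_eq_zero {R ι : Type*} [RieszAlgebra R] [NoZeroDivisors R]
    [Fintype ι] {v : ι → R} : v ⬝ᵥ v = 0 ↔ v = 0 :=
  (Fintype.sum_eq_zero_iff_of_nonneg fun i => RieszAlgebra.sq_nonneg (v i)).trans <| by
    simp [funext_iff]

theorem Matrix.isUnit_of_forall_isUnit_dotProduct_mulVec_self {R ι : Type*} [CommRing R]
    [Fintype ι] [DecidableEq ι] {A : Matrix ι ι R}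
    (hA : ∀ v : ι → R, v ≠ 0 → IsUnit (v ⬝ᵥ A *ᵥ v)) (i : ι) {c : R} (hc : c ≠ 0) :
    IsUnit c := by
  have hv : (Pi.single i c : ι → R) ≠ 0 := fun h => hc (by simpa using congrFun h i)
  have hu := hA _ hv
  rw [single_dotProduct, mulVec_single] at hu
  exact isUnit_of_mul_isUnit_left hu

theorem RieszAlgebra.isUnit_dotProduct_self {R ι : Type*} [RieszAlgebra R] [Fintype ι]
    {A : Matrix ι ι R} (hA : ∀ v : ι → R, v ≠ 0 → IsUnit (v ⬝ᵥ A *ᵥ v))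
    {v : ι → R} (hv : v ≠ 0) : IsUnit (v ⬝ᵥ v) := by
  classical
  obtain ⟨i, -⟩ := Function.ne_iff.mp hv
  have hfield := fun c (hc : c ≠ 0) => isUnit_of_forall_isUnit_dotProduct_mulVec_self hA i hc
  have : NoZeroDivisors R := ⟨fun {a b} hab => or_iff_not_imp_left.mpr fun ha =>
    (hfield a ha).mul_right_eq_zero.mp hab⟩
  exact hfield _ (mt dotProduct_self_eq_zero.mp hv)

theorem Matrix.IsSymm.dotProduct_mulVec_comm {R ι : Type*} [CommRing R] [Fintype ι]
    {A : Matrix ι ι R} (hA : A.IsSymm) (v w : ι → R) : v ⬝ᵥ A *ᵥ w = w ⬝ᵥ A *ᵥ v := by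
  rw [dotProduct_mulVec, dotProduct_comm, ← mulVec_transpose, hA.eq]

/-- `Ring.inverse` is `0` on non-units, so `isUnit_energy` is what makes the quotients genuine. -/
structure IsCGSequence {R ι : Type*} [CommRing R] [Fintype ι] (A : Matrix ι ι R) (b : ι → R)
    (x r p : ℕ → ι → R) (α : ℕ → R) (k : ℕ) : Prop where
  direction_zero : p 0 = b - A *ᵥ x 0
  isUnit_energy : ∀ j ≤ k, IsUnit (p j ⬝ᵥ A *ᵥ p j)
  iterate_succ : ∀ j < k, x (j + 1) = x j + α j • p j
  residual_eq : ∀ j ≤ k, r j = b - A *ᵥ x j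
  direction_succ : ∀ j < k, p (j + 1) = r (j + 1) -
    ((r (j + 1) ⬝ᵥ A *ᵥ p j) * Ring.inverse (p j ⬝ᵥ A *ᵥ p j)) • p j
  stepSize_eq : ∀ j ≤ k, α j = (r j ⬝ᵥ p j) * Ring.inverse (p j ⬝ᵥ A *ᵥ p j)

namespace IsCGSequence

section CommRing

variable {R ι : Type*} [CommRing R] [Fintype ι] {A : Matrix ι ι R} {b : ι → R}
  {x r p : ℕ → ι → R} {α : ℕ → R} {k : ℕ} (h : IsCGSequence A b x r p α k)
include h

theorem residual_zero : r 0 = p 0 :=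
  (h.residual_eq 0 k.zero_le).trans h.direction_zero.symm

theorem residual_succ {j : ℕ} (hj : j < k) : r (j + 1) = r j - α j • A *ᵥ p j := by
  rw [h.residual_eq _ hj, h.residual_eq _ hj.le, h.iterate_succ j hj, mulVec_add, mulVec_smul]
  abel

theorem residual_eq_direction_add {j : ℕ} (hj : j < k) : r (j + 1) = p (j + 1) +
    ((r (j + 1) ⬝ᵥ A *ᵥ p j) * Ring.inverse (p j ⬝ᵥ A *ᵥ p j)) • p j := by
  rw [h.direction_succ j hj]
  abel

theorem direction_succ_dotProduct_mulVec {j : ℕ} (hj : j < k) :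
    p (j + 1) ⬝ᵥ A *ᵥ p j = 0 := by
  rw [h.direction_succ j hj, sub_dotProduct, smul_dotProduct, smul_eq_mul, mul_assoc,
    Ring.inverse_mul_cancel _ (h.isUnit_energy j hj.le), mul_one, sub_self]

theorem direction_ne_zero [Nontrivial R] {j : ℕ} (hj : j ≤ k) : p j ≠ 0 := by
  intro hp
  simpa [hp] using h.isUnit_energy j hj

theorem residual_ne_zero [Nontrivial R] {j : ℕ} (hj : j ≤ k) : r j ≠ 0 := by
  intro hr
  apply h.direction_ne_zero hj
  cases j with
  | zero => rw [← h.residual_zero, hr]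
  | succ j => rw [h.direction_succ j hj, hr]; simp

theorem residual_dotProduct_direction_self {i : ℕ} (hi : i ≤ k)
    (horth : ∀ j < i, r i ⬝ᵥ p j = 0) : r i ⬝ᵥ p i = r i ⬝ᵥ r i := by
  cases i with
  | zero => rw [h.residual_zero]
  | succ i =>
    rw [h.direction_succ i hi, dotProduct_sub, dotProduct_smul, horth i i.lt_succ_self,
      smul_zero, sub_zero]

theorem residual_succ_dotProduct_direction {m : ℕ} (hm : m < k)
    (hconj : ∀ i < m, p i ⬝ᵥ A *ᵥ p m = 0) (horth : ∀ i < m, r m ⬝ᵥ p i = 0) :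
    ∀ i ≤ m, r (m + 1) ⬝ᵥ p i = 0 := by
  intro i hi
  rw [h.residual_succ hm, sub_dotProduct, smul_dotProduct, dotProduct_comm (A *ᵥ p m),
    smul_eq_mul]
  rcases hi.eq_or_lt with rfl | hi
  · rw [h.stepSize_eq i hm.le, mul_assoc, Ring.inverse_mul_cancel _ (h.isUnit_energy i hm.le),
      mul_one, sub_self]
  · rw [horth i hi, hconj i hi, mul_zero, sub_zero]

theorem residual_dotProduct_residual_succ {m : ℕ} (hm : m < k)
    (horth : ∀ i ≤ m, r (m + 1) ⬝ᵥ p i = 0) : ∀ i ≤ m, r i ⬝ᵥ r (m + 1) = 0 := by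
  intro i hi
  rw [dotProduct_comm]
  cases i with
  | zero => rw [h.residual_zero]; exact horth 0 hi
  | succ i =>
    rw [h.residual_eq_direction_add (j := i) (by omega), dotProduct_add, dotProduct_smul,
      horth (i + 1) hi, horth i (by omega), smul_zero, add_zero]

theorem direction_dotProduct_mulVec_direction_succ (hA : A.IsSymm) {m : ℕ} (hm : m < k)
    (hconj : ∀ i < m, p i ⬝ᵥ A *ᵥ p m = 0) (hα : ∀ i < m, IsUnit (α i))
    (horth : ∀ i ≤ m, r i ⬝ᵥ r (m + 1) = 0) : ∀ i ≤ m, p i ⬝ᵥ A *ᵥ p (m + 1) = 0 := by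
  intro i hi
  rw [hA.dotProduct_mulVec_comm]
  rcases hi.eq_or_lt with rfl | hi
  · exact h.direction_succ_dotProduct_mulVec hm
  have hstep : α i • A *ᵥ p i = r i - r (i + 1) := by
    rw [h.residual_succ (hi.trans hm)]
    abel
  have hres : α i * (r (m + 1) ⬝ᵥ A *ᵥ p i) = 0 := by
    rw [← smul_eq_mul, ← dotProduct_smul, hstep, dotProduct_sub, dotProduct_comm,
      horth i hi.le, dotProduct_comm, horth (i + 1) hi, sub_self]
  rw [h.direction_succ m hm, sub_dotProduct, smul_dotProduct,
    hA.dotProduct_mulVec_comm (p m) (p i), hconj i hi, smul_zero, sub_zero]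
  exact (hα i hi).mul_right_eq_zero.mp hres

end CommRing

section RieszAlgebra

variable {R ι : Type*} [RieszAlgebra R] [Fintype ι] {A : Matrix ι ι R} {b : ι → R}
  {x r p : ℕ → ι → R} {α : ℕ → R} {k : ℕ} (h : IsCGSequence A b x r p α k)
  (hA : A.IsSymm) (hpd : ∀ v : ι → R, v ≠ 0 → IsUnit (v ⬝ᵥ A *ᵥ v))
include h hpd

theorem isUnit_stepSize {i : ℕ} (hi : i ≤ k) (horth : ∀ j < i, r i ⬝ᵥ p j = 0) :
    IsUnit (α i) := by
  rcases subsingleton_or_nontrivial R with _ | _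
  · exact isUnit_of_subsingleton _
  rw [h.stepSize_eq i hi, h.residual_dotProduct_direction_self hi horth]
  exact (RieszAlgebra.isUnit_dotProduct_self hpd (h.residual_ne_zero hi)).mul
    (isUnit_ringInverse.mpr (h.isUnit_energy i hi))

include hA

theorem orthogonal_of_lt {m : ℕ} (hm : m ≤ k) :
    ∀ i < m, r i ⬝ᵥ r m = 0 ∧ p i ⬝ᵥ A *ᵥ p m = 0 ∧ r m ⬝ᵥ p i = 0 := by
  induction m using Nat.strong_induction_on with
  | _ m ih =>
    rcases m with _ | m
    · exact fun i hi => absurd hi i.not_lt_zero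
    have ih_m := ih m m.lt_succ_self (by omega)
    have hconj : ∀ i < m, p i ⬝ᵥ A *ᵥ p m = 0 := fun i hi => (ih_m i hi).2.1
    have horth_p := h.residual_succ_dotProduct_direction (by omega) hconj
      fun i hi => (ih_m i hi).2.2
    have horth_r := h.residual_dotProduct_residual_succ (by omega) horth_p
    have hα : ∀ i < m, IsUnit (α i) := fun i hi =>
      h.isUnit_stepSize hpd (by omega) fun j hj => (ih i (by omega) (by omega) j hj).2.2
    have hconj_succ :=
      h.direction_dotProduct_mulVec_direction_succ hA (by omega) hconj hα horth_r
    exact fun i hi => ⟨horth_r i (by omega), hconj_succ i (by omega), horth_p i (by omega)⟩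

theorem residual_orthogonal {i j : ℕ} (hij : i ≠ j) (hi : i ≤ k) (hj : j ≤ k) :
    r i ⬝ᵥ r j = 0 := by
  rcases hij.lt_or_gt with hij | hij
  · exact (h.orthogonal_of_lt hA hpd hj i hij).1
  · rw [dotProduct_comm]
    exact (h.orthogonal_of_lt hA hpd hi j hij).1

theorem direction_conjugate {i j : ℕ} (hij : i ≠ j) (hi : i ≤ k) (hj : j ≤ k) :
    p i ⬝ᵥ A *ᵥ p j = 0 := by
  rcases hij.lt_or_gt with hij | hij
  · exact (h.orthogonal_of_lt hA hpd hj i hij).2.1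
  · rw [hA.dotProduct_mulVec_comm]
    exact (h.orthogonal_of_lt hA hpd hi j hij).2.1

end RieszAlgebra

end IsCGSequence

/-- CGM residual orthogonality and conjugacy: `rᵢᵀrⱼ = 0` and `pᵢᵀApⱼ = 0` for
`i ≠ j`, `0 ≤ i, j ≤ k`. -/
theorem stmt14 {R : Type*} [RealRieszAlgebra R] {n : ℕ}
    (A : Matrix (Fin n) (Fin n) R) (hsymm : Aᵀ = A)
    (hpd : ∀ v : Fin n → R, v ≠ 0 → SPos (v ⬝ᵥ A *ᵥ v))
    (b : Fin n → R) (x r p : ℕ → Fin n → R) (α : ℕ → R) (k : ℕ)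
    (hp0 : p 0 = b - A *ᵥ x 0)
    (hunit : ∀ j ≤ k, IsUnit (p j ⬝ᵥ A *ᵥ p j))
    (hx : ∀ j < k, x (j + 1) = x j + α j • p j)
    (hr : ∀ j ≤ k, r j = b - A *ᵥ x j)
    (hp : ∀ j < k, p (j + 1) = r (j + 1) -
      ((r (j + 1) ⬝ᵥ A *ᵥ p j) * Ring.inverse (p j ⬝ᵥ A *ᵥ p j)) • p j)
    (hα : ∀ j ≤ k, α j = (r j ⬝ᵥ p j) * Ring.inverse (p j ⬝ᵥ A *ᵥ p j)) :
    (∀ i j : ℕ, i ≠ j → i ≤ k → j ≤ k → r i ⬝ᵥ r j = 0) ∧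
    (∀ i j : ℕ, i ≠ j → i ≤ k → j ≤ k → p i ⬝ᵥ A *ᵥ p j = 0) := by
  have h : IsCGSequence A b x r p α k := ⟨hp0, hunit, hx, hr, hp, hα⟩
  have hpd' : ∀ v : Fin n → R, v ≠ 0 → IsUnit (v ⬝ᵥ A *ᵥ v) := fun v hv => (hpd v hv).2.2
  exact ⟨fun i j hij hi hj => h.residual_orthogonal hsymm hpd' hij hi hj,
    fun i j hij hi hj => h.direction_conjugate hsymm hpd' hij hi hj⟩
end

section
/- The CGM over a commutative real Riesz algebra terminates within n steps: if CGM for the n×n system Ax = b is feasible at every step and no residual r_k with k ≤ n vanishes, a contradiction arises, since the residuals r₀, ..., r_n would be n+1 pairwise orthogonal nonzero (hence linearly independent) vectors in the rank-n free module Rⁿ. -/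
open Matrix

/-! The residuals of CGM are pairwise orthogonal (the classical
induction, carried out over a commutative ring, where invertibility of `rᵢᵀrᵢ` replaces
nonvanishing), and pairwise orthogonal vectors with invertible squared lengths are linearly
independent, so `Rⁿ` cannot contain the `n + 1` residuals `r₀, …, r_n`. -/

namespace Matrix

variable {R ι n : Type*} [CommRing R] [Fintype n]

theorem dotProduct_mulVec_comm_of_transpose_eq {A : Matrix n n R} (hA : Aᵀ = A) (u v : n → R) :
    u ⬝ᵥ A *ᵥ v = v ⬝ᵥ A *ᵥ u := by
  rw [dotProduct_mulVec, ← mulVec_transpose, hA, dotProduct_comm]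

theorem linearIndependent_of_pairwise_dotProduct_eq_zero {v : ι → n → R}
    (horth : Pairwise fun i j => v i ⬝ᵥ v j = 0) (hunit : ∀ i, IsUnit (v i ⬝ᵥ v i)) :
    LinearIndependent R v := by
  rw [linearIndependent_iff']
  intro s w hs i hi
  have hsum : ∑ j ∈ s, w j * (v j ⬝ᵥ v i) = w i * (v i ⬝ᵥ v i) :=
    Finset.sum_eq_single_of_mem i hi fun j _ hji => by rw [horth hji, mul_zero]
  have hzero : (∑ j ∈ s, w j • v j) ⬝ᵥ v i = 0 := by rw [hs, zero_dotProduct]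
  simp only [sum_dotProduct, smul_dotProduct, smul_eq_mul, hsum] at hzero
  exact (hunit i).mul_left_eq_zero.mp hzero

theorem card_le_of_pairwise_dotProduct_eq_zero [Nontrivial R] [Fintype ι] {v : ι → n → R}
    (horth : Pairwise fun i j => v i ⬝ᵥ v j = 0) (hunit : ∀ i, IsUnit (v i ⬝ᵥ v i)) :
    Fintype.card ι ≤ Fintype.card n := by
  simpa using (linearIndependent_of_pairwise_dotProduct_eq_zero horth hunit).fintype_card_le_finrank

end Matrix

section ConjugateGradient

variable {R n : Type*} [CommRing R] [Fintype n]

structure IsCGIteration (N : ℕ) (A : Matrix n n R) (b : n → R) (x r p : ℕ → n → R)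
    (α : ℕ → R) : Prop where
  direction_zero : p 0 = b - A *ᵥ x 0
  isUnit_curvature : ∀ j ≤ N, IsUnit (p j ⬝ᵥ A *ᵥ p j)
  iterate_succ : ∀ j < N, x (j + 1) = x j + α j • p j
  residual_eq : ∀ j ≤ N, r j = b - A *ᵥ x j
  direction_succ : ∀ j < N, p (j + 1) = r (j + 1) -
    ((r (j + 1) ⬝ᵥ A *ᵥ p j) * Ring.inverse (p j ⬝ᵥ A *ᵥ p j)) • p j
  stepSize_eq : ∀ j ≤ N, α j = (r j ⬝ᵥ p j) * Ring.inverse (p j ⬝ᵥ A *ᵥ p j)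

namespace IsCGIteration

variable {N : ℕ} {A : Matrix n n R} {b : n → R} {x r p : ℕ → n → R} {α : ℕ → R}

theorem residual_zero (h : IsCGIteration N A b x r p α) : r 0 = p 0 := by
  rw [h.residual_eq 0 N.zero_le, h.direction_zero]

theorem residual_succ (h : IsCGIteration N A b x r p α) {j : ℕ} (hj : j < N) :
    r (j + 1) = r j - α j • (A *ᵥ p j) := by
  rw [h.residual_eq (j + 1) hj, h.iterate_succ j hj, mulVec_add, mulVec_smul,
    h.residual_eq j hj.le]
  abel

theorem dotProduct_direction_self (h : IsCGIteration N A b x r p α) {k : ℕ} (hk : k ≤ N)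
    (hrp : ∀ i < k, r k ⬝ᵥ p i = 0) : r k ⬝ᵥ p k = r k ⬝ᵥ r k := by
  cases k with
  | zero => rw [h.residual_zero]
  | succ j =>
    rw [h.direction_succ j hk, dotProduct_sub, dotProduct_smul, smul_eq_mul,
      hrp j j.lt_succ_self, mul_zero, sub_zero]

theorem isUnit_stepSize (h : IsCGIteration N A b x r p α) {k : ℕ} (hk : k ≤ N)
    (hrp : ∀ i < k, r k ⬝ᵥ p i = 0) (hrr : IsUnit (r k ⬝ᵥ r k)) : IsUnit (α k) := by
  rw [h.stepSize_eq k hk, h.dotProduct_direction_self hk hrp]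
  exact hrr.mul (isUnit_ringInverse.mpr (h.isUnit_curvature k hk))

theorem residual_succ_dotProduct_direction (h : IsCGIteration N A b x r p α) (hA : Aᵀ = A)
    {k : ℕ} (hk : k < N) (hrp : ∀ i < k, r k ⬝ᵥ p i = 0)
    (hpp : ∀ i < k, p k ⬝ᵥ A *ᵥ p i = 0) : ∀ i < k + 1, r (k + 1) ⬝ᵥ p i = 0 := by
  intro i hi
  rw [h.residual_succ hk, sub_dotProduct, smul_dotProduct, smul_eq_mul, dotProduct_comm (A *ᵥ _)]
  rcases Nat.lt_succ_iff_lt_or_eq.mp hi with hik | rfl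
  · rw [hrp i hik, dotProduct_mulVec_comm_of_transpose_eq hA, hpp i hik, mul_zero, sub_zero]
  · rw [h.stepSize_eq i hk.le, mul_assoc,
      Ring.inverse_mul_cancel _ (h.isUnit_curvature i hk.le), mul_one, sub_self]

theorem residual_dotProduct_residual (h : IsCGIteration N A b x r p α) {k : ℕ} (hk : k ≤ N)
    (hrp : ∀ i < k, r k ⬝ᵥ p i = 0) : ∀ i < k, r k ⬝ᵥ r i = 0 := by
  intro i hi
  -- `rᵢ` is a combination of `pᵢ` and `pᵢ₋₁`.
  cases i with
  | zero => rw [h.residual_zero]; exact hrp 0 hi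
  | succ j =>
    rw [sub_eq_iff_eq_add.mp (h.direction_succ j (by omega)).symm, dotProduct_add,
      dotProduct_smul, smul_eq_mul, hrp (j + 1) hi, hrp j (by omega), mul_zero, add_zero]

theorem direction_succ_conjugate (h : IsCGIteration N A b x r p α) {k : ℕ} (hk : k < N)
    (hpp : ∀ i < k, p k ⬝ᵥ A *ᵥ p i = 0) (hrr : ∀ i < k + 1, r (k + 1) ⬝ᵥ r i = 0)
    (hα : ∀ i < k, IsUnit (α i)) : ∀ i < k + 1, p (k + 1) ⬝ᵥ A *ᵥ p i = 0 := by
  intro i hi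
  rw [h.direction_succ k hk, sub_dotProduct, smul_dotProduct, smul_eq_mul]
  rcases Nat.lt_succ_iff_lt_or_eq.mp hi with hik | rfl
  · rw [hpp i hik, mul_zero, sub_zero]
    -- `α i • A pᵢ = rᵢ - rᵢ₊₁`, and `rₖ₊₁` is orthogonal to both.
    have hstep : α i • (A *ᵥ p i) = r i - r (i + 1) := by
      rw [h.residual_succ (hik.trans hk)]; abel
    have hzero : α i * (r (k + 1) ⬝ᵥ A *ᵥ p i) = 0 := by
      rw [← smul_eq_mul, ← dotProduct_smul, hstep, dotProduct_sub, hrr i hi,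
        hrr (i + 1) (by omega), sub_self]
    exact (hα i hik).mul_right_eq_zero.mp hzero
  · rw [mul_assoc, Ring.inverse_mul_cancel _ (h.isUnit_curvature i hk.le), mul_one, sub_self]

theorem orthogonal_and_conjugate (h : IsCGIteration N A b x r p α) (hA : Aᵀ = A)
    (hrr : ∀ i ≤ N, IsUnit (r i ⬝ᵥ r i)) :
    ∀ k ≤ N, (∀ i < k, r k ⬝ᵥ p i = 0) ∧ ∀ i < k, p k ⬝ᵥ A *ᵥ p i = 0 := by
  intro k
  induction k using Nat.strong_induction_on with
  | _ k ih =>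
    intro hk
    cases k with
    | zero => simp
    | succ k =>
      obtain ⟨hrp, hpp⟩ := ih k k.lt_succ_self (by omega)
      have hrp' := h.residual_succ_dotProduct_direction hA (by omega) hrp hpp
      refine ⟨hrp', h.direction_succ_conjugate (by omega) hpp
        (h.residual_dotProduct_residual hk hrp') fun i hi => ?_⟩
      exact h.isUnit_stepSize (by omega) (ih i (by omega) (by omega)).1 (hrr i (by omega))

theorem pairwise_residual_dotProduct_eq_zero (h : IsCGIteration N A b x r p α) (hA : Aᵀ = A)
    (hrr : ∀ i ≤ N, IsUnit (r i ⬝ᵥ r i)) :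
    Pairwise fun i j : Fin (N + 1) => r i ⬝ᵥ r j = 0 := by
  have horth (j : Fin (N + 1)) : ∀ i < (j : ℕ), r j ⬝ᵥ r i = 0 :=
    h.residual_dotProduct_residual j.is_le (h.orthogonal_and_conjugate hA hrr j j.is_le).1
  intro i j hij
  rcases Fin.lt_or_lt_of_ne hij with hlt | hlt
  · rw [dotProduct_comm]; exact horth j i hlt
  · exact horth i j hlt

end IsCGIteration

end ConjugateGradient

theorem stmt17_general {R : Type*} [RealRieszAlgebra R] {n : ℕ}
    (A : Matrix (Fin n) (Fin n) R) (hsymm : Aᵀ = A)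
    (b : Fin n → R) (x r p : ℕ → Fin n → R) (α : ℕ → R)
    (hp0 : p 0 = b - A *ᵥ x 0)
    (hunit : ∀ j ≤ n, IsUnit (p j ⬝ᵥ A *ᵥ p j))
    (hx : ∀ j < n, x (j + 1) = x j + α j • p j)
    (hr : ∀ j ≤ n, r j = b - A *ᵥ x j)
    (hp : ∀ j < n, p (j + 1) = r (j + 1) -
      ((r (j + 1) ⬝ᵥ A *ᵥ p j) * Ring.inverse (p j ⬝ᵥ A *ᵥ p j)) • p j)
    (hα : ∀ j ≤ n, α j = (r j ⬝ᵥ p j) * Ring.inverse (p j ⬝ᵥ A *ᵥ p j)) :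
    ∀ hnz : ∀ i ≤ n, r i ≠ 0, ∀ hrr : ∀ i ≤ n, IsUnit (r i ⬝ᵥ r i),
    False := by
  intro hnz hrr
  have hcg : IsCGIteration n A b x r p α := ⟨hp0, hunit, hx, hr, hp, hα⟩
  have : Nontrivial (Fin n → R) := ⟨⟨_, _, hnz 0 n.zero_le⟩⟩
  have : Nontrivial R := Module.nontrivial R (Fin n → R)
  have hcard := Matrix.card_le_of_pairwise_dotProduct_eq_zero
    (hcg.pairwise_residual_dotProduct_eq_zero hsymm hrr) fun i => hrr i i.is_le
  simp at hcard

/-- CGM terminates within `n` steps: if the recursion is feasible at every step up to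
`n`, each residual `r₀,…,r_n` is nonzero, and `rᵢᵀrᵢ` is invertible for each of them,
a contradiction arises (n+1 pairwise orthogonal such vectors cannot exist in `Rⁿ`). -/
theorem stmt17 {R : Type*} [RealRieszAlgebra R] {n : ℕ}
    (A : Matrix (Fin n) (Fin n) R) (hsymm : Aᵀ = A)
    (hpd : ∀ v : Fin n → R, v ≠ 0 → SPos (v ⬝ᵥ A *ᵥ v))
    (b : Fin n → R) (x r p : ℕ → Fin n → R) (α : ℕ → R)
    (hp0 : p 0 = b - A *ᵥ x 0)
    (hunit : ∀ j ≤ n, IsUnit (p j ⬝ᵥ A *ᵥ p j))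
    (hx : ∀ j < n, x (j + 1) = x j + α j • p j)
    (hr : ∀ j ≤ n, r j = b - A *ᵥ x j)
    (hp : ∀ j < n, p (j + 1) = r (j + 1) -
      ((r (j + 1) ⬝ᵥ A *ᵥ p j) * Ring.inverse (p j ⬝ᵥ A *ᵥ p j)) • p j)
    (hα : ∀ j ≤ n, α j = (r j ⬝ᵥ p j) * Ring.inverse (p j ⬝ᵥ A *ᵥ p j)) :
    ∀ hnz : ∀ i ≤ n, r i ≠ 0, ∀ hrr : ∀ i ≤ n, IsUnit (r i ⬝ᵥ r i),
    False :=
  stmt17_general A hsymm b x r p α hp0 hunit hx hr hp hα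
end
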